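/- arXiv:1404.1774 — 2 statements merged into one kernel-verified Lean document; each statement's English description precedes it below -/
import Mathlib

section
/- (Syzygy criterion.) Let α, β ∈ 𝒢, let γ = spair(α,β), suppose σ(γ) is predictably syzygy, and let 𝒢 be a signature Gröbner basis up to signature σ(γ). Then γ s-reduces to zero w.r.t. 𝒢. Moreover, if S is the signature of some syzygy and S | T, then T is also the signature of some syzygy. -/
open MvPolynomial

namespace SigGB

/-- A monomial order on the monomials of `R = K[x₁,…,xₙ]` (represented by their
exponent vectors in `Fin n →₀ ℕ`) together with a compatible module monomial order
on the module monomials of `R^m` (represented by pairs `(μ, i)` for `x^μ·eᵢ`). -/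
structure SigOrder (n m : ℕ) : Type where
  /-- the monomial order `≤` on `R` -/
  rle : (Fin n →₀ ℕ) → (Fin n →₀ ℕ) → Prop
  /-- the module monomial order `≤` on `R^m` -/
  mle : (Fin n →₀ ℕ) × Fin m → (Fin n →₀ ℕ) × Fin m → Prop
  rle_refl : ∀ a, rle a a
  rle_trans : ∀ {a b c}, rle a b → rle b c → rle a c
  rle_antisymm : ∀ {a b}, rle a b → rle b a → a = b
  rle_total : ∀ a b, rle a b ∨ rle b a
  rle_wf : WellFounded fun a b => rle a b ∧ a ≠ b
  rle_add : ∀ (c : Fin n →₀ ℕ) {a b}, rle a b → rle (c + a) (c + b)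
  mle_refl : ∀ S, mle S S
  mle_trans : ∀ {S T U}, mle S T → mle T U → mle S U
  mle_antisymm : ∀ {S T}, mle S T → mle T S → S = T
  mle_total : ∀ S T, mle S T ∨ mle T S
  mle_wf : WellFounded fun S T => mle S T ∧ S ≠ T
  mle_add : ∀ (c : Fin n →₀ ℕ) {S T}, mle S T → mle (c + S.1, S.2) (c + T.1, T.2)
  compat : ∀ (a b : Fin n →₀ ℕ) (i : Fin m), rle a b ↔ mle (a, i) (b, i)

variable {K : Type*} [Field K] {n m : ℕ}

/-- the strict monomial order -/
def SigOrder.rlt (O : SigOrder n m) (a b : Fin n →₀ ℕ) : Prop :=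
  O.rle a b ∧ a ≠ b

/-- the strict module monomial order -/
def SigOrder.mlt (O : SigOrder n m) (S T : (Fin n →₀ ℕ) × Fin m) : Prop :=
  O.mle S T ∧ S ≠ T

/-- divisibility of module monomials: `S ∣ T` iff `T = c·S` for some monomial `c` -/
def mmDvd (S T : (Fin n →₀ ℕ) × Fin m) : Prop :=
  ∃ c : Fin n →₀ ℕ, T = (c + S.1, S.2)

/-- `π : R^m → R`, `α ↦ Σ αᵢ fᵢ` -/
noncomputable def proj (f α : Fin m → MvPolynomial (Fin n) K) : MvPolynomial (Fin n) K :=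
  ∑ i, α i * f i

open Classical in
/-- the `≤`-maximal monomial of `p` (junk value `0` for `p = 0`) -/
noncomputable def leadMon (O : SigOrder n m) (p : MvPolynomial (Fin n) K) : Fin n →₀ ℕ :=
  if h : ∃ μ, μ ∈ p.support ∧ ∀ ν ∈ p.support, O.rle ν μ then h.choose else 0

/-- the lead coefficient of `p` -/
noncomputable def leadCoeff (O : SigOrder n m) (p : MvPolynomial (Fin n) K) : K :=
  p.coeff (leadMon O p)

/-- the lead term `lt(p)` (a term, i.e. monomial together with its coefficient) -/
noncomputable def leadTerm (O : SigOrder n m) (p : MvPolynomial (Fin n) K) :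
    MvPolynomial (Fin n) K :=
  monomial (leadMon O p) (leadCoeff O p)

/-- `lt(p) ≃ lt(q)`: the lead terms agree up to a nonzero scalar -/
def LeadTermAssoc (O : SigOrder n m) (p q : MvPolynomial (Fin n) K) : Prop :=
  p ≠ 0 ∧ q ≠ 0 ∧ leadMon O p = leadMon O q

open Classical in
/-- the module monomial of the signature `σ(α)`: the `≤`-maximal module monomial
occurring in `α` (junk value for `α = 0`) -/
noncomputable def sigMon [NeZero m] (O : SigOrder n m)
    (α : Fin m → MvPolynomial (Fin n) K) : (Fin n →₀ ℕ) × Fin m :=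
  if h : ∃ S : (Fin n →₀ ℕ) × Fin m, (α S.2).coeff S.1 ≠ 0 ∧
      ∀ T : (Fin n →₀ ℕ) × Fin m, (α T.2).coeff T.1 ≠ 0 → O.mle T S
  then h.choose
  else (0, ⟨0, Nat.pos_of_ne_zero (NeZero.ne m)⟩)

/-- the coefficient of the signature term of `α` -/
noncomputable def sigCoeff [NeZero m] (O : SigOrder n m)
    (α : Fin m → MvPolynomial (Fin n) K) : K :=
  (α (sigMon O α).2).coeff (sigMon O α).1

/-- `b` is a (not necessarily monic) monomial of `R` -/
def IsMonomial (b : MvPolynomial (Fin n) K) : Prop :=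
  ∃ (ν : Fin n →₀ ℕ) (c : K), c ≠ 0 ∧ b = monomial ν c

/-- `b·β` s-reduces the term of `π(α)` at the monomial `μ`:
`b` is a monomial, `μ` is a term of `π(α)`, `lt(b·π(β))` equals that term, and
`σ(b·β) ≤ σ(α)`. -/
def SRed [NeZero m] (O : SigOrder n m) (f α β : Fin m → MvPolynomial (Fin n) K)
    (b : MvPolynomial (Fin n) K) (μ : Fin n →₀ ℕ) : Prop :=
  IsMonomial b ∧ (proj f α).coeff μ ≠ 0 ∧
  leadTerm O (b * proj f β) = monomial μ ((proj f α).coeff μ) ∧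
  O.mle (sigMon O (b • β)) (sigMon O α)

/-- a regular s-reduction: additionally `σ(b·β) ≠ σ(α)` (as module monomials) -/
def RegSRed [NeZero m] (O : SigOrder n m) (f α β : Fin m → MvPolynomial (Fin n) K)
    (b : MvPolynomial (Fin n) K) (μ : Fin n →₀ ℕ) : Prop :=
  SRed O f α β b μ ∧ sigMon O (b • β) ≠ sigMon O α

/-- one s-reduction step w.r.t. `G` -/
def Step [NeZero m] (O : SigOrder n m) (f : Fin m → MvPolynomial (Fin n) K)
    (G : Set (Fin m → MvPolynomial (Fin n) K))
    (α γ : Fin m → MvPolynomial (Fin n) K) : Prop :=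
  ∃ β ∈ G, ∃ b μ, SRed O f α β b μ ∧ γ = α - b • β

/-- one regular s-reduction step w.r.t. `G` -/
def RegStep [NeZero m] (O : SigOrder n m) (f : Fin m → MvPolynomial (Fin n) K)
    (G : Set (Fin m → MvPolynomial (Fin n) K))
    (α γ : Fin m → MvPolynomial (Fin n) K) : Prop :=
  ∃ β ∈ G, ∃ b μ, RegSRed O f α β b μ ∧ γ = α - b • β

/-- `α` s-reduces to zero w.r.t. `G`: some sequence of s-reduction steps turns it
into a syzygy -/
def SReducesToZero [NeZero m] (O : SigOrder n m) (f : Fin m → MvPolynomial (Fin n) K)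
    (G : Set (Fin m → MvPolynomial (Fin n) K))
    (α : Fin m → MvPolynomial (Fin n) K) : Prop :=
  ∃ γ, Relation.ReflTransGen (Step O f G) α γ ∧ proj f γ = 0

/-- `α` regular s-reduces to zero w.r.t. `G` -/
def RegSReducesToZero [NeZero m] (O : SigOrder n m) (f : Fin m → MvPolynomial (Fin n) K)
    (G : Set (Fin m → MvPolynomial (Fin n) K))
    (α : Fin m → MvPolynomial (Fin n) K) : Prop :=
  ∃ γ, Relation.ReflTransGen (RegStep O f G) α γ ∧ proj f γ = 0

/-- `G` is a signature Gröbner basis in signature `T` -/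
def IsSigGBIn [NeZero m] (O : SigOrder n m) (f : Fin m → MvPolynomial (Fin n) K)
    (G : Set (Fin m → MvPolynomial (Fin n) K)) (T : (Fin n →₀ ℕ) × Fin m) : Prop :=
  ∀ α : Fin m → MvPolynomial (Fin n) K, α ≠ 0 → sigMon O α = T → SReducesToZero O f G α

/-- `G` is a signature Gröbner basis up to signature `T` -/
def IsSigGBUpTo [NeZero m] (O : SigOrder n m) (f : Fin m → MvPolynomial (Fin n) K)
    (G : Set (Fin m → MvPolynomial (Fin n) K)) (T : (Fin n →₀ ℕ) × Fin m) : Prop :=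
  ∀ S, O.mlt S T → IsSigGBIn O f G S

/-- `G` is a signature Gröbner basis -/
def IsSigGB [NeZero m] (O : SigOrder n m) (f : Fin m → MvPolynomial (Fin n) K)
    (G : Set (Fin m → MvPolynomial (Fin n) K)) : Prop :=
  ∀ T, IsSigGBIn O f G T

/-- the monic least common multiple of two monomials (componentwise max) -/
noncomputable def monLcm (μ ν : Fin n →₀ ℕ) : Fin n →₀ ℕ :=
  Finsupp.zipWith max (max_self 0) μ ν

/-- the S-pair `spair(α,β) = (λ/lt(π α))·α − (λ/lt(π β))·β` -/
noncomputable def spair (O : SigOrder n m) (f α β : Fin m → MvPolynomial (Fin n) K) :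
    Fin m → MvPolynomial (Fin n) K :=
  (monomial (monLcm (leadMon O (proj f α)) (leadMon O (proj f β)) - leadMon O (proj f α))
      (leadCoeff O (proj f α))⁻¹ : MvPolynomial (Fin n) K) • α -
  (monomial (monLcm (leadMon O (proj f α)) (leadMon O (proj f β)) - leadMon O (proj f β))
      (leadCoeff O (proj f β))⁻¹ : MvPolynomial (Fin n) K) • β

/-- `spair(α,β)` is a regular S-pair: `π α ≠ 0 ≠ π β` and the signatures of the two
halves differ -/
def IsRegularSPair [NeZero m] (O : SigOrder n m)
    (f α β : Fin m → MvPolynomial (Fin n) K) : Prop :=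
  proj f α ≠ 0 ∧ proj f β ≠ 0 ∧
  sigMon O ((monomial (monLcm (leadMon O (proj f α)) (leadMon O (proj f β)) -
      leadMon O (proj f α)) (leadCoeff O (proj f α))⁻¹ : MvPolynomial (Fin n) K) • α) ≠
  sigMon O ((monomial (monLcm (leadMon O (proj f α)) (leadMon O (proj f β)) -
      leadMon O (proj f β)) (leadCoeff O (proj f β))⁻¹ : MvPolynomial (Fin n) K) • β)

/-- the signature `T` is predictably syzygy: some syzygy `s` has `σ(s) < T` and
`σ(s) ∣ T` -/
def PredictablySyzygy [NeZero m] (O : SigOrder n m) (f : Fin m → MvPolynomial (Fin n) K)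
    (T : (Fin n →₀ ℕ) × Fin m) : Prop :=
  ∃ s : Fin m → MvPolynomial (Fin n) K, s ≠ 0 ∧ proj f s = 0 ∧
    O.mlt (sigMon O s) T ∧ mmDvd (sigMon O s) T

/-- a rewrite order on `G ∪ H`: a partial order that is total on `G` -/
def IsRewriteOrder (G H : Set (Fin m → MvPolynomial (Fin n) K))
    (rew : (Fin m → MvPolynomial (Fin n) K) → (Fin m → MvPolynomial (Fin n) K) → Prop) :
    Prop :=
  (∀ α ∈ G ∪ H, rew α α) ∧
  (∀ α β γ : Fin m → MvPolynomial (Fin n) K, rew α β → rew β γ → rew α γ) ∧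
  (∀ α β : Fin m → MvPolynomial (Fin n) K, rew α β → rew β α → α = β) ∧
  (∀ α ∈ G, ∀ β ∈ G, rew α β ∨ rew β α)

/-- `β` admits a rewriter in signature `T`, i.e. some monomial multiple of `β` has
signature `T` -/
def IsRewriterIn [NeZero m] (O : SigOrder n m) (β : Fin m → MvPolynomial (Fin n) K)
    (T : (Fin n →₀ ℕ) × Fin m) : Prop :=
  ∃ a : Fin n →₀ ℕ, sigMon O ((monomial a (1 : K) : MvPolynomial (Fin n) K) • β) = T

/-- `x^a·α` is the canonical rewriter in signature `T` w.r.t. `rew`: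
`α ∈ G ∪ H`, `σ(x^a·α) = T`, and `α` is `rew`-maximal among elements of `G ∪ H`
admitting a rewriter in `T` -/
def IsCanonicalRewriter [NeZero m] (O : SigOrder n m)
    (G H : Set (Fin m → MvPolynomial (Fin n) K))
    (rew : (Fin m → MvPolynomial (Fin n) K) → (Fin m → MvPolynomial (Fin n) K) → Prop)
    (α : Fin m → MvPolynomial (Fin n) K) (a : Fin n →₀ ℕ)
    (T : (Fin n →₀ ℕ) × Fin m) : Prop :=
  α ∈ G ∪ H ∧ sigMon O ((monomial a (1 : K) : MvPolynomial (Fin n) K) • α) = T ∧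
  ∀ β ∈ G ∪ H, IsRewriterIn O β T → rew β α

/-- `γ` is regular top s-reducible w.r.t. `G` -/
def RegTopSReducible [NeZero m] (O : SigOrder n m) (f : Fin m → MvPolynomial (Fin n) K)
    (G : Set (Fin m → MvPolynomial (Fin n) K))
    (γ : Fin m → MvPolynomial (Fin n) K) : Prop :=
  ∃ β ∈ G, ∃ b, RegSRed O f γ β b (leadMon O (proj f γ))

/-- `G` is a rewrite basis in signature `T`: the canonical rewriter in `T` is not
regular top s-reducible w.r.t. `G` -/
def IsRewriteBasisIn [NeZero m] (O : SigOrder n m) (f : Fin m → MvPolynomial (Fin n) K)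
    (G H : Set (Fin m → MvPolynomial (Fin n) K))
    (rew : (Fin m → MvPolynomial (Fin n) K) → (Fin m → MvPolynomial (Fin n) K) → Prop)
    (T : (Fin n →₀ ℕ) × Fin m) : Prop :=
  ∀ (α : Fin m → MvPolynomial (Fin n) K) (a : Fin n →₀ ℕ),
    IsCanonicalRewriter O G H rew α a T →
    ¬ RegTopSReducible O f G ((monomial a (1 : K) : MvPolynomial (Fin n) K) • α)

/-- `G` is a rewrite basis up to signature `T` -/
def IsRewriteBasisUpTo [NeZero m] (O : SigOrder n m) (f : Fin m → MvPolynomial (Fin n) K)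
    (G H : Set (Fin m → MvPolynomial (Fin n) K))
    (rew : (Fin m → MvPolynomial (Fin n) K) → (Fin m → MvPolynomial (Fin n) K) → Prop)
    (T : (Fin n →₀ ℕ) × Fin m) : Prop :=
  ∀ S, O.mlt S T → IsRewriteBasisIn O f G H rew S

/-- one ordinary polynomial reduction step w.r.t. a set `G` of polynomials -/
def PolyRedStep (O : SigOrder n m) (G : Set (MvPolynomial (Fin n) K))
    (p q : MvPolynomial (Fin n) K) : Prop :=
  ∃ g ∈ G, ∃ (b : MvPolynomial (Fin n) K) (μ : Fin n →₀ ℕ),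
    IsMonomial b ∧ p.coeff μ ≠ 0 ∧
    leadTerm O (b * g) = monomial μ (p.coeff μ) ∧ q = p - b * g

/-- `p` reduces to zero w.r.t. `G` under ordinary polynomial reduction -/
def PolyReducesToZero (O : SigOrder n m) (G : Set (MvPolynomial (Fin n) K))
    (p : MvPolynomial (Fin n) K) : Prop :=
  Relation.ReflTransGen (PolyRedStep O G) p 0

/-- `G` is a Gröbner basis for the ideal `I` -/
def IsGroebnerBasis (O : SigOrder n m) (G : Set (MvPolynomial (Fin n) K))
    (I : Ideal (MvPolynomial (Fin n) K)) : Prop :=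
  G ⊆ ↑I ∧ ∀ p ∈ I, PolyReducesToZero O G p


section Aux

variable {K : Type*} [Field K] {n m : ℕ}

private lemma exists_max_fin {τ : Type*} (r : τ → τ → Prop)
    (htot : ∀ a b, r a b ∨ r b a) (htrans : ∀ {a b c}, r a b → r b c → r a c)
    (s : Finset τ) (hs : s.Nonempty) : ∃ x ∈ s, ∀ y ∈ s, r y x := by
  classical
  induction s using Finset.induction with
  | empty => exact absurd hs (by simp)
  | @insert a t ha ih =>
    by_cases hne : t.Nonempty
    · obtain ⟨x, hx, hmax⟩ := ih hne
      rcases htot a x with h | h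
      · exact ⟨x, Finset.mem_insert_of_mem hx, fun y hy => by
          rcases Finset.mem_insert.1 hy with rfl | hy
          · exact h
          · exact hmax y hy⟩
      · exact ⟨a, Finset.mem_insert_self _ _, fun y hy => by
          rcases Finset.mem_insert.1 hy with rfl | hy
          · rcases htot y y with h' | h' <;> exact h'
          · exact htrans (hmax y hy) h⟩
    · have : t = ∅ := Finset.not_nonempty_iff_eq_empty.1 hne
      subst this
      refine ⟨a, Finset.mem_insert_self _ _, fun y hy => ?_⟩
      rcases Finset.mem_insert.1 hy with rfl | hy
      · rcases htot y y with h' | h' <;> exact h'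
      · simp at hy

private lemma sig_exists [NeZero m] (O : SigOrder n m)
    (s : Fin m → MvPolynomial (Fin n) K) (hs : s ≠ 0) :
    ∃ S : (Fin n →₀ ℕ) × Fin m, (s S.2).coeff S.1 ≠ 0 ∧
      ∀ T : (Fin n →₀ ℕ) × Fin m, (s T.2).coeff T.1 ≠ 0 → O.mle T S := by
  classical
  set F : Finset ((Fin n →₀ ℕ) × Fin m) :=
    Finset.univ.biUnion fun i => (s i).support.image (fun μ => (μ, i)) with hF
  have hmem : ∀ T : (Fin n →₀ ℕ) × Fin m, (s T.2).coeff T.1 ≠ 0 → T ∈ F := by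
    intro T hT
    refine Finset.mem_biUnion.2 ⟨T.2, Finset.mem_univ _, Finset.mem_image.2 ⟨T.1,
      MvPolynomial.mem_support_iff.2 hT, rfl⟩⟩
  have hne : (F.filter fun T => (s T.2).coeff T.1 ≠ 0).Nonempty := by
    have : ∃ i, s i ≠ 0 := by
      by_contra h
      push_neg at h
      exact hs (funext h)
    obtain ⟨i, hi⟩ := this
    obtain ⟨μ, hμ⟩ := MvPolynomial.support_nonempty.2 hi
    have hμ' := MvPolynomial.mem_support_iff.1 hμ
    exact ⟨(μ, i), Finset.mem_filter.2 ⟨hmem (μ, i) hμ', hμ'⟩⟩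
  obtain ⟨S, hS, hmax⟩ := exists_max_fin O.mle O.mle_total (fun h1 h2 => O.mle_trans h1 h2)
    _ hne
  refine ⟨S, (Finset.mem_filter.1 hS).2, fun T hT => hmax T (Finset.mem_filter.2
    ⟨hmem T hT, hT⟩)⟩

private lemma sigMon_spec [NeZero m] (O : SigOrder n m)
    (s : Fin m → MvPolynomial (Fin n) K) (hs : s ≠ 0) :
    (s (sigMon O s).2).coeff (sigMon O s).1 ≠ 0 ∧
      ∀ T : (Fin n →₀ ℕ) × Fin m, (s T.2).coeff T.1 ≠ 0 → O.mle T (sigMon O s) := by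
  classical
  have h := sig_exists O s hs
  rw [sigMon, dif_pos h]
  exact h.choose_spec

private lemma sigMon_eq [NeZero m] (O : SigOrder n m)
    {s : Fin m → MvPolynomial (Fin n) K} {S : (Fin n →₀ ℕ) × Fin m}
    (h1 : (s S.2).coeff S.1 ≠ 0)
    (h2 : ∀ T : (Fin n →₀ ℕ) × Fin m, (s T.2).coeff T.1 ≠ 0 → O.mle T S) :
    sigMon O s = S := by
  have hs : s ≠ 0 := by
    intro h; rw [h] at h1; simp at h1
  obtain ⟨hc, hmax⟩ := sigMon_spec O s hs
  exact O.mle_antisymm (h2 _ hc) (hmax S h1)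

private lemma proj_zero (f : Fin m → MvPolynomial (Fin n) K) :
    proj f (0 : Fin m → MvPolynomial (Fin n) K) = 0 := by
  simp [proj]

private lemma proj_add (f x y : Fin m → MvPolynomial (Fin n) K) :
    proj f (x + y) = proj f x + proj f y := by
  simp [proj, add_mul, Finset.sum_add_distrib]

private lemma proj_smul (f : Fin m → MvPolynomial (Fin n) K)
    (p : MvPolynomial (Fin n) K) (x : Fin m → MvPolynomial (Fin n) K) :
    proj f (p • x) = p * proj f x := by
  simp [proj, Finset.mul_sum, mul_assoc]

/-- a monomial multiple of a syzygy is a syzygy with shifted signature -/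
private lemma syz_shift [NeZero m] (O : SigOrder n m) (f : Fin m → MvPolynomial (Fin n) K)
    {s : Fin m → MvPolynomial (Fin n) K} (hs0 : s ≠ 0) (hsz : proj f s = 0)
    (c : Fin n →₀ ℕ) :
    ∃ t : Fin m → MvPolynomial (Fin n) K, t ≠ 0 ∧ proj f t = 0 ∧
      sigMon O t = (c + (sigMon O s).1, (sigMon O s).2) := by
  classical
  set t : Fin m → MvPolynomial (Fin n) K :=
    (monomial c (1 : K) : MvPolynomial (Fin n) K) • s with ht
  obtain ⟨hc, hmax⟩ := sigMon_spec O s hs0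
  have hcoefft : ∀ i μ, (t i).coeff μ =
      if c ≤ μ then (s i).coeff (μ - c) else 0 := by
    intro i μ
    simp only [ht, Pi.smul_apply, smul_eq_mul]
    rw [MvPolynomial.coeff_monomial_mul']
    split <;> simp
  have hkey : (t (sigMon O s).2).coeff (c + (sigMon O s).1) ≠ 0 := by
    rw [hcoefft, if_pos le_self_add, add_tsub_cancel_left]
    exact hc
  have hmax' : ∀ T : (Fin n →₀ ℕ) × Fin m, (t T.2).coeff T.1 ≠ 0 →
      O.mle T (c + (sigMon O s).1, (sigMon O s).2) := by
    intro T hT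
    rw [hcoefft] at hT
    by_cases hle : c ≤ T.1
    · rw [if_pos hle] at hT
      have := O.mle_add c (hmax (T.1 - c, T.2) hT)
      rwa [add_tsub_cancel_of_le hle] at this
    · rw [if_neg hle] at hT; exact absurd rfl hT
  refine ⟨t, ?_, ?_, sigMon_eq O hkey hmax'⟩
  · intro h; rw [h] at hkey; simp at hkey
  · rw [ht, proj_smul, hsz, mul_zero]

private lemma mlt_of_mle_of_mlt [NeZero m] (O : SigOrder n m)
    {S T U : (Fin n →₀ ℕ) × Fin m} (h1 : O.mle S T) (h2 : O.mlt T U) : O.mlt S U := by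
  refine ⟨O.mle_trans h1 h2.1, fun h => ?_⟩
  subst h
  exact h2.2 (O.mle_antisymm h2.1 h1)

end Aux

/-- Syzygy criterion: If `γ = spair(α,β)` with `α, β ∈ G`, `σ(γ)` is
predictably syzygy and `G` is a signature Gröbner basis up to `σ(γ)`, then `γ`
s-reduces to zero w.r.t. `G`.  Moreover, if `S` is the signature of some syzygy and
`S ∣ T` then `T` is the signature of some syzygy. -/
theorem statement6 {K : Type*} [Field K] {n m : ℕ} [NeZero m]
    (O : SigOrder n m) (f : Fin m → MvPolynomial (Fin n) K)
    (G : Finset (Fin m → MvPolynomial (Fin n) K))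
    (α β : Fin m → MvPolynomial (Fin n) K) (hαG : α ∈ G) (hβG : β ∈ G)
    (hα : proj f α ≠ 0) (hβ : proj f β ≠ 0)
    (hps : PredictablySyzygy O f (sigMon O (spair O f α β)))
    (hGB : IsSigGBUpTo O f ↑G (sigMon O (spair O f α β))) :
    SReducesToZero O f ↑G (spair O f α β) ∧
    ∀ S T : (Fin n →₀ ℕ) × Fin m,
      (∃ s : Fin m → MvPolynomial (Fin n) K, s ≠ 0 ∧ proj f s = 0 ∧ sigMon O s = S) →
      mmDvd S T →
      ∃ t : Fin m → MvPolynomial (Fin n) K, t ≠ 0 ∧ proj f t = 0 ∧ sigMon O t = T := by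
  classical
  -- Part 2 first, as a standalone fact
  have part2 : ∀ S T : (Fin n →₀ ℕ) × Fin m,
      (∃ s : Fin m → MvPolynomial (Fin n) K, s ≠ 0 ∧ proj f s = 0 ∧ sigMon O s = S) →
      mmDvd S T →
      ∃ t : Fin m → MvPolynomial (Fin n) K, t ≠ 0 ∧ proj f t = 0 ∧ sigMon O t = T := by
    rintro S T ⟨s, hs0, hsz, rfl⟩ ⟨c, rfl⟩
    exact syz_shift O f hs0 hsz c
  refine ⟨?_, part2⟩
  set γ : Fin m → MvPolynomial (Fin n) K := spair O f α β with hγ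
  by_cases hγ0 : proj f γ = 0
  · exact ⟨γ, Relation.ReflTransGen.refl, hγ0⟩
  have hγne : γ ≠ 0 := by
    intro h; rw [h, proj_zero] at hγ0; exact hγ0 rfl
  obtain ⟨s, hs0, hsz, hslt, hsdvd⟩ := hps
  obtain ⟨t, ht0, htz, htsig⟩ := part2 _ _ ⟨s, hs0, hsz, rfl⟩ hsdvd
  obtain ⟨hγc, hγmax⟩ := sigMon_spec O γ hγne
  obtain ⟨htc, htmax⟩ := sigMon_spec O t ht0
  rw [htsig] at htc htmax
  set Sg := sigMon O γ with hSg
  set κ : K := (γ Sg.2).coeff Sg.1 * ((t Sg.2).coeff Sg.1)⁻¹ with hκ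
  have hκne : κ ≠ 0 := mul_ne_zero hγc (inv_ne_zero htc)
  set γ' : Fin m → MvPolynomial (Fin n) K := γ - (C κ : MvPolynomial (Fin n) K) • t
    with hγ'
  have hγ'coeff : ∀ U : (Fin n →₀ ℕ) × Fin m,
      (γ' U.2).coeff U.1 = (γ U.2).coeff U.1 - κ * (t U.2).coeff U.1 := by
    intro U
    simp [hγ', MvPolynomial.coeff_C_mul]
  have hPγ' : ∀ U : (Fin n →₀ ℕ) × Fin m, (γ' U.2).coeff U.1 ≠ 0 → O.mlt U Sg := by
    intro U hU
    rw [hγ'coeff] at hU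
    have hne : U ≠ Sg := by
      rintro rfl
      apply hU
      rw [hκ, mul_assoc, inv_mul_cancel₀ htc, mul_one, sub_self]
    have hle : O.mle U Sg := by
      by_cases h1 : (γ U.2).coeff U.1 ≠ 0
      · exact hγmax U h1
      · push_neg at h1
        rw [h1, zero_sub, neg_ne_zero] at hU
        exact htmax U fun h => hU (by rw [h, mul_zero])
    exact ⟨hle, hne⟩
  by_cases hγ'0 : γ' = 0
  · exfalso
    have : γ = (C κ : MvPolynomial (Fin n) K) • t := by
      have := sub_eq_zero.1 hγ'0
      exact this
    rw [this, proj_smul, htz, mul_zero] at hγ0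
    exact hγ0 rfl
  have hγ'lt : O.mlt (sigMon O γ') Sg := hPγ' _ (sigMon_spec O γ' hγ'0).1
  obtain ⟨δ, hchain, hδz⟩ := hGB (sigMon O γ') hγ'lt γ' hγ'0 rfl
  -- lift the chain from γ' to γ = γ' + C κ • t
  have key : ∀ δ : Fin m → MvPolynomial (Fin n) K,
      Relation.ReflTransGen (Step O f ↑G) γ' δ →
      (∀ U : (Fin n →₀ ℕ) × Fin m, (δ U.2).coeff U.1 ≠ 0 → O.mlt U Sg) ∧
      Relation.ReflTransGen (Step O f ↑G) γ (δ + (C κ : MvPolynomial (Fin n) K) • t) := by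
    intro δ hδ
    induction hδ with
    | refl =>
      refine ⟨hPγ', ?_⟩
      have : γ' + (C κ : MvPolynomial (Fin n) K) • t = γ := by
        rw [hγ']; abel
      rw [this]
    | @tail δ₁ δ₂ hst hstep ih =>
      obtain ⟨hP, hch⟩ := ih
      obtain ⟨β', hβ'G, b, μ, ⟨hb, hcf, hltm, hsg⟩, hδ₂⟩ := hstep
      have hδ₁ne : δ₁ ≠ 0 := by
        intro h; rw [h, proj_zero] at hcf; simp at hcf
      have hδ₁lt : O.mlt (sigMon O δ₁) Sg := hP _ (sigMon_spec O δ₁ hδ₁ne).1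
      have hcoeffsum : ∀ U : (Fin n →₀ ℕ) × Fin m,
          (((δ₁ + (C κ : MvPolynomial (Fin n) K) • t) : Fin m → _) U.2).coeff U.1 =
          (δ₁ U.2).coeff U.1 + κ * (t U.2).coeff U.1 := by
        intro U
        simp [MvPolynomial.coeff_C_mul]
      have hsig1 : sigMon O (δ₁ + (C κ : MvPolynomial (Fin n) K) • t) = Sg := by
        apply sigMon_eq O
        · rw [hcoeffsum]
          have hz : (δ₁ Sg.2).coeff Sg.1 = 0 := by
            by_contra h
            exact (hP Sg h).2 rfl
          rw [hz, zero_add]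
          exact mul_ne_zero hκne htc
        · intro T hT
          rw [hcoeffsum] at hT
          by_cases h1 : (δ₁ T.2).coeff T.1 ≠ 0
          · exact (hP T h1).1
          · push_neg at h1
            rw [h1, zero_add] at hT
            exact htmax T fun h => hT (by rw [h, mul_zero])
      have hproj : proj f (δ₁ + (C κ : MvPolynomial (Fin n) K) • t) = proj f δ₁ := by
        rw [proj_add, proj_smul, htz, mul_zero, add_zero]
      have hstep' : Step O f (↑G) (δ₁ + (C κ : MvPolynomial (Fin n) K) • t)
          (δ₂ + (C κ : MvPolynomial (Fin n) K) • t) := by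
        refine ⟨β', hβ'G, b, μ, ⟨hb, ?_, ?_, ?_⟩, ?_⟩
        · rw [hproj]; exact hcf
        · rw [hproj]; exact hltm
        · rw [hsig1]
          exact O.mle_trans hsg hδ₁lt.1
        · rw [hδ₂]; abel
      refine ⟨?_, hch.tail hstep'⟩
      intro U hU
      rw [hδ₂] at hU
      have : (δ₁ U.2).coeff U.1 ≠ 0 ∨ ((b • β' : Fin m → _) U.2).coeff U.1 ≠ 0 := by
        by_contra h
        push_neg at h
        apply hU
        simp only [Pi.sub_apply, MvPolynomial.coeff_sub, h.1, h.2, sub_zero]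
      rcases this with h | h
      · exact hP U h
      · have hbβne : (b • β' : Fin m → MvPolynomial (Fin n) K) ≠ 0 := by
          intro hz; rw [hz] at h; simp at h
        have := (sigMon_spec O _ hbβne).2 U h
        exact mlt_of_mle_of_mlt O (O.mle_trans this hsg) hδ₁lt
  obtain ⟨_, hchain'⟩ := key δ hchain
  refine ⟨δ + (C κ : MvPolynomial (Fin n) K) • t, hchain', ?_⟩
  rw [proj_add, proj_smul, htz, mul_zero, add_zero, hδz]


end SigGB
end

section
/- Let T be a module monomial, let 𝒢 ⊆ R^m be finite, and let α ∈ 𝒢 and a be a monomial with σ(a·α) = T such that a·α is the canonical rewriter in T with respect to ⊴_rat, i.e., for every δ ∈ 𝒢 and monomial d with σ(d·δ) = T one has lt(d·δ̄) ≥ lt(a·ᾱ). Then every γ ∈ R^m with σ(γ) = T and lt(γ̄) < lt(a·ᾱ) is not singular top s-reducible w.r.t. 𝒢 (there are no δ ∈ 𝒢 and monomial d with lt(d·δ̄) ≃ lt(γ̄) and σ(d·δ) ≃ σ(γ)). -/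
open MvPolynomial

namespace SigGB

variable {K : Type*} [Field K] {n m : ℕ}

/-- If `x^a·α` is the canonical rewriter in signature `T` w.r.t.
`⊴_rat` (every `d·δ` with `δ ∈ G` and `σ(d·δ) = T` has `lt(d·π δ) ≥ lt(x^a·π α)`),
then no `γ` with `σ(γ) = T` and `lt(π γ) < lt(x^a·π α)` is singular top s-reducible
w.r.t. `G`. -/
theorem statement10 {K : Type*} [Field K] {n m : ℕ} [NeZero m]
    (O : SigOrder n m) (f : Fin m → MvPolynomial (Fin n) K)
    (G : Finset (Fin m → MvPolynomial (Fin n) K))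
    (T : (Fin n →₀ ℕ) × Fin m)
    (α : Fin m → MvPolynomial (Fin n) K) (hαG : α ∈ G) (a : Fin n →₀ ℕ)
    (hsig : sigMon O ((monomial a (1 : K) : MvPolynomial (Fin n) K) • α) = T)
    (hcan : ∀ δ ∈ G, ∀ (d : Fin n →₀ ℕ) (c : K), c ≠ 0 →
      sigMon O ((monomial d c : MvPolynomial (Fin n) K) • δ) = T →
      O.rle (leadMon O ((monomial a (1 : K) : MvPolynomial (Fin n) K) * proj f α))
        (leadMon O ((monomial d c : MvPolynomial (Fin n) K) * proj f δ))) :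
    ∀ γ : Fin m → MvPolynomial (Fin n) K, γ ≠ 0 → sigMon O γ = T →
      O.rlt (leadMon O (proj f γ))
        (leadMon O ((monomial a (1 : K) : MvPolynomial (Fin n) K) * proj f α)) →
      ¬ ∃ δ ∈ G, ∃ (d : Fin n →₀ ℕ) (c : K), c ≠ 0 ∧
          LeadTermAssoc O ((monomial d c : MvPolynomial (Fin n) K) * proj f δ)
            (proj f γ) ∧
          sigMon O ((monomial d c : MvPolynomial (Fin n) K) • δ) = sigMon O γ := by
  rintro γ hγ hsγ hlt ⟨δ, hδG, d, c, hc, ⟨-, -, hassoc⟩, hsd⟩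
  have h := hcan δ hδG d c hc (hsd.trans hsγ)
  rw [hassoc] at h
  exact hlt.2 (O.rle_antisymm hlt.1 h)

end SigGB
end
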